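/- The Wilson score interval endpoints are monotone in the success count: for fixed n and z > 0, if k₁ ≤ k₂ then both the lower and upper Wilson endpoints computed at k₁ are at most the corresponding endpoints at k₂. -/

import Mathlib

/-!
With `D k = z² + 4k(n - k)/n`, both endpoints have numerator `2k + z² ∓ z √(D k)`, so it suffices
that `|z| |√(D k₂) - √(D k₁)| ≤ 2 (k₂ - k₁)`. This holds because `D k ≥ z²`, so
`2|z| |√(D k₂) - √(D k₁)| ≤ (√(D k₂) + √(D k₁)) |√(D k₂) - √(D k₁)| = |D k₂ - D k₁|`, and
`k(n - k)` is `n`-Lipschitz on `[0, n]`.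
-/

/-- Lower Wilson endpoint for k successes in n trials with parameter z. -/
noncomputable def wilsonL (n : ℕ) (z : ℝ) (k : ℕ) : ℝ :=
  (2 * k + z ^ 2 - z * Real.sqrt (z ^ 2 + 4 * k * ((n : ℝ) - k) / n)) /
    (2 * ((n : ℝ) + z ^ 2))

/-- Upper Wilson endpoint for k successes in n trials with parameter z. -/
noncomputable def wilsonU (n : ℕ) (z : ℝ) (k : ℕ) : ℝ :=
  (2 * k + z ^ 2 + z * Real.sqrt (z ^ 2 + 4 * k * ((n : ℝ) - k) / n)) /
    (2 * ((n : ℝ) + z ^ 2))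

theorem abs_mul_sub_sub_mul_sub_le {N x y : ℝ} (hx : 0 ≤ x) (hxN : x ≤ N) (hy : 0 ≤ y)
    (hyN : y ≤ N) : |x * (N - x) - y * (N - y)| ≤ N * |x - y| := by
  have hsum : |N - x - y| ≤ N := abs_le.mpr ⟨by linarith, by linarith⟩
  calc |x * (N - x) - y * (N - y)| = |x - y| * |N - x - y| := by
        rw [← abs_mul]; ring_nf
    _ ≤ |x - y| * N := by gcongr
    _ = N * |x - y| := mul_comm _ _

theorem two_mul_abs_mul_abs_sqrt_sub_sqrt_le {z a b : ℝ} (ha : z ^ 2 ≤ a) (hb : z ^ 2 ≤ b) :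
    2 * |z| * |√b - √a| ≤ |b - a| := by
  have hza : |z| ≤ √a := Real.sqrt_sq_eq_abs z ▸ Real.sqrt_le_sqrt ha
  have hzb : |z| ≤ √b := Real.sqrt_sq_eq_abs z ▸ Real.sqrt_le_sqrt hb
  calc 2 * |z| * |√b - √a| ≤ (√b + √a) * |√b - √a| := by gcongr; linarith
    _ = |b - a| := by
      rw [← abs_of_nonneg (by positivity : 0 ≤ √b + √a), ← abs_mul, ← sq_sub_sq,
        Real.sq_sqrt ((sq_nonneg z).trans hb), Real.sq_sqrt ((sq_nonneg z).trans ha)]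

noncomputable def wilsonDisc (n : ℕ) (z x : ℝ) : ℝ :=
  z ^ 2 + 4 * x * ((n : ℝ) - x) / n

theorem sq_le_wilsonDisc (n : ℕ) (z : ℝ) {x : ℝ} (hx : 0 ≤ x) (hxn : x ≤ n) :
    z ^ 2 ≤ wilsonDisc n z x := by
  have : 0 ≤ 4 * x * ((n : ℝ) - x) / n := div_nonneg (by nlinarith) n.cast_nonneg
  unfold wilsonDisc
  linarith

theorem abs_wilsonDisc_sub_le (n : ℕ) (z : ℝ) {x y : ℝ} (hx : 0 ≤ x) (hxn : x ≤ n) (hy : 0 ≤ y)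
    (hyn : y ≤ n) : |wilsonDisc n z y - wilsonDisc n z x| ≤ 4 * |y - x| := by
  rw [wilsonDisc, wilsonDisc, add_sub_add_left_eq_sub, ← sub_div, abs_div, Nat.abs_cast]
  refine div_le_of_le_mul₀ n.cast_nonneg (by positivity) ?_
  calc |4 * y * ((n : ℝ) - y) - 4 * x * ((n : ℝ) - x)|
      = 4 * |y * (n - y) - x * (n - x)| := by
        rw [mul_assoc, mul_assoc, ← mul_sub, abs_mul, abs_of_pos four_pos]
    _ ≤ 4 * (n * |y - x|) := by gcongr; exact abs_mul_sub_sub_mul_sub_le hy hyn hx hxn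
    _ = 4 * |y - x| * n := by ring

theorem abs_mul_sqrt_wilsonDisc_sub_le (n : ℕ) (z : ℝ) {x y : ℝ} (hx : 0 ≤ x) (hxy : x ≤ y)
    (hyn : y ≤ n) : |z * (√(wilsonDisc n z y) - √(wilsonDisc n z x))| ≤ 2 * (y - x) := by
  have hxn : x ≤ n := hxy.trans hyn
  have hy : 0 ≤ y := hx.trans hxy
  have hsqrt := two_mul_abs_mul_abs_sqrt_sub_sqrt_le (sq_le_wilsonDisc n z hx hxn)
    (sq_le_wilsonDisc n z hy hyn)
  have hdisc := abs_wilsonDisc_sub_le n z hx hxn hy hyn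
  rw [abs_of_nonneg (sub_nonneg.mpr hxy)] at hdisc
  rw [abs_mul]
  linarith

theorem stmt_11_general (n : ℕ) (z : ℝ)
    (k₁ k₂ : ℕ) (h12 : k₁ ≤ k₂) (h2n : k₂ ≤ n) :
    wilsonL n z k₁ ≤ wilsonL n z k₂ ∧ wilsonU n z k₁ ≤ wilsonU n z k₂ := by
  have key := abs_le.mp <| abs_mul_sqrt_wilsonDisc_sub_le n z k₁.cast_nonneg
    (Nat.cast_le.mpr h12) (Nat.cast_le.mpr h2n)
  have hden : (0 : ℝ) ≤ 2 * ((n : ℝ) + z ^ 2) := by positivity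
  unfold wilsonDisc at key
  constructor <;> apply div_le_div_of_nonneg_right _ hden <;> linarith [key.1, key.2]

/-- Both Wilson endpoints are nondecreasing in the success count k on {0,…,n}. -/
theorem stmt_11 (n : ℕ) (hn : 0 < n) (z : ℝ) (hz : 0 < z)
    (k₁ k₂ : ℕ) (h12 : k₁ ≤ k₂) (h2n : k₂ ≤ n) :
    wilsonL n z k₁ ≤ wilsonL n z k₂ ∧ wilsonU n z k₁ ≤ wilsonU n z k₂ :=
  stmt_11_general n z k₁ k₂ h12 h2n
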